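/- Let N be a positive integer and let k be a real number that is not an integer. Then N − (1/(2π²))(1 − cos(2πk)) · Σ_{l,m=0}^{N−1} 1/(k+l−m)² equals min(N, |k| − sin(2π|k|)/(2π)) + (sin²(π|k|)/π²)·(ψ₀(N+|k|) + (N+|k|)ψ₁(N+|k|) + ψ₀(|N−|k||+1) + |N−|k||·ψ₁(|N−|k||+1) − 2|k|ψ₁(|k|+1) − 2ψ₀(|k|+1)). -/

import Mathlib

open Real Filter Finset

/-- The `k`-th polygamma function: the `(k+1)`-st derivative of `log ∘ Γ`.
(Since `Real.log` of a negative number is the log of its absolute value, this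
agrees with the analytic continuation of the polygamma functions.) -/
noncomputable def polygamma (k : ℕ) (x : ℝ) : ℝ :=
  iteratedDeriv (k + 1) (fun y => Real.log (Real.Gamma y)) x

/-- The digamma function `ψ₀`. -/
noncomputable def digamma (x : ℝ) : ℝ := polygamma 0 x

/-- The trigamma function `ψ₁`. -/
noncomputable def trigamma (x : ℝ) : ℝ := polygamma 1 x

/-!
Put `Φ(b) = ψ₀(b + 1) + b ψ₁(b + 1)`, so that `Φ(b) - Φ(b - 1) = ψ₁(b)`. Since
`ψ₁(x) - ψ₁(x + 1) = 1 / x²`, the row sums of `∑_{l,m<N} (a + l - m)⁻²` telescope to differences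
of `ψ₁`, hence of `Φ`, and the double sum is the negative second difference
`2 Φ(a) - Φ(a + N) - Φ(a - N)`. For `a > N` this is the closed form, the minimum being `N`.
For `a < N` the reflection formulas give
`sin²(πa)/π² · (Φ(N - a) - Φ(a - N)) = sin(2πa)/(2π) - (a - N)`, which trades `Φ(a - N)` for
`Φ |N - a|` and produces the term `a - sin(2πa)/(2π)`. The left side is even in `k`, so one may
take `a = |k|`.

The polygamma identities come from differentiating `log Γ(x + 1) = log x + log Γ(x)` and
`log Γ(x) + log Γ(1 - x) = log π - log sin(πx)`; `log Γ` is twice differentiable off the poles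
because `Γ` is the restriction of the holomorphic complex Gamma function.
-/

open Topology

theorem Complex.analyticAt_Gamma {s : ℂ} (hs : ∀ m : ℕ, s ≠ -m) : AnalyticAt ℂ Gamma s := by
  refine Complex.analyticAt_iff_eventually_differentiableAt.2 ?_
  filter_upwards [(differentiableAt_Gamma s hs).continuousAt.eventually_ne (Gamma_ne_zero hs)]
    with z hz
  exact differentiableAt_Gamma z fun m hm => hz ((Gamma_eq_zero_iff z).2 ⟨m, hm⟩)

theorem Real.analyticAt_Gamma {x : ℝ} (hx : ∀ m : ℕ, x ≠ -m) : AnalyticAt ℝ Gamma x :=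
  (Complex.reCLM.analyticAt _).comp <| (Complex.analyticAt_Gamma (s := x)
    (fun m hm => hx m (by exact_mod_cast hm))).restrictScalars.comp
      (Complex.ofRealCLM.analyticAt x)

theorem eventually_forall_ne_neg_natCast {x : ℝ} (hx : ∀ m : ℕ, x ≠ -m) :
    ∀ᶠ y in 𝓝 x, ∀ m : ℕ, y ≠ -(m : ℝ) := by
  filter_upwards [(differentiableAt_Gamma hx).continuousAt.eventually_ne (Gamma_ne_zero hx)]
    with y hy
  exact fun m hm => hy ((Gamma_eq_zero_iff y).2 ⟨m, hm⟩)

theorem forall_add_natCast_ne_neg {x : ℝ} (hx : ∀ m : ℕ, x ≠ -m) (j : ℕ) :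
    ∀ m : ℕ, x + j ≠ -m :=
  fun m h => hx (m + j) (by push_cast; linarith)

theorem digamma_eq_deriv : digamma = deriv fun y => log (Gamma y) :=
  funext fun _ => congrFun iteratedDeriv_one _

theorem hasDerivAt_log_Gamma {x : ℝ} (hx : ∀ m : ℕ, x ≠ -m) :
    HasDerivAt (fun y => log (Gamma y)) (digamma x) x := by
  rw [digamma_eq_deriv]
  exact ((differentiableAt_Gamma hx).log (Gamma_ne_zero hx)).hasDerivAt

theorem digamma_eq_deriv_Gamma_div {x : ℝ} (hx : ∀ m : ℕ, x ≠ -m) :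
    digamma x = deriv Gamma x / Gamma x :=
  ((differentiableAt_Gamma hx).hasDerivAt.log (Gamma_ne_zero hx)).unique (hasDerivAt_log_Gamma hx)
    |>.symm

theorem analyticAt_digamma {x : ℝ} (hx : ∀ m : ℕ, x ≠ -m) : AnalyticAt ℝ digamma x := by
  refine ((analyticAt_Gamma hx).deriv.div (analyticAt_Gamma hx) (Gamma_ne_zero hx)).congr ?_
  filter_upwards [eventually_forall_ne_neg_natCast hx] with y hy
  exact (digamma_eq_deriv_Gamma_div hy).symm

theorem hasDerivAt_digamma {x : ℝ} (hx : ∀ m : ℕ, x ≠ -m) :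
    HasDerivAt digamma (trigamma x) x := by
  have h := (analyticAt_digamma hx).differentiableAt.hasDerivAt
  rwa [digamma_eq_deriv, ← iteratedDeriv_one, ← iteratedDeriv_succ] at h

theorem digamma_add_one {x : ℝ} (hx : ∀ m : ℕ, x ≠ -m) : digamma (x + 1) = digamma x + x⁻¹ := by
  have hx0 : x ≠ 0 := by simpa using hx 0
  have hshift : HasDerivAt (fun y => log (Gamma (y + 1))) (digamma (x + 1)) x :=
    (hasDerivAt_log_Gamma (by exact_mod_cast forall_add_natCast_ne_neg hx 1)).comp_add_const x 1
  have hlog_Gamma_add_one : (fun y => log (Gamma (y + 1))) =ᶠ[𝓝 x]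
      fun y => log (Gamma y) + log y := by
    filter_upwards [eventually_forall_ne_neg_natCast hx, eventually_ne_nhds hx0] with y hy hy0
    rw [Gamma_add_one hy0, log_mul hy0 (Gamma_ne_zero hy), add_comm]
  exact hshift.unique <|
    ((hasDerivAt_log_Gamma hx).add (hasDerivAt_log hx0)).congr_of_eventuallyEq hlog_Gamma_add_one

theorem trigamma_add_one {x : ℝ} (hx : ∀ m : ℕ, x ≠ -m) :
    trigamma (x + 1) = trigamma x - (x ^ 2)⁻¹ := by
  have hx0 : x ≠ 0 := by simpa using hx 0
  have hshift : HasDerivAt (fun y => digamma (y + 1)) (trigamma (x + 1)) x :=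
    (hasDerivAt_digamma (by exact_mod_cast forall_add_natCast_ne_neg hx 1)).comp_add_const x 1
  have hdigamma_add_one : (fun y => digamma (y + 1)) =ᶠ[𝓝 x] fun y => digamma y + y⁻¹ := by
    filter_upwards [eventually_forall_ne_neg_natCast hx] with y hy
    exact digamma_add_one hy
  rw [sub_eq_add_neg]
  exact hshift.unique <|
    ((hasDerivAt_digamma hx).add (hasDerivAt_inv hx0)).congr_of_eventuallyEq hdigamma_add_one

theorem forall_ne_neg_natCast_of_sin_pi_mul_ne_zero {x : ℝ} (hx : sin (π * x) ≠ 0) :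
    ∀ m : ℕ, x ≠ -m := by
  rintro m rfl
  exact hx (sin_eq_zero_iff.2 ⟨-m, by push_cast; ring⟩)

theorem eventually_sin_pi_mul_ne_zero {x : ℝ} (hx : sin (π * x) ≠ 0) :
    ∀ᶠ y in 𝓝 x, sin (π * y) ≠ 0 :=
  (continuous_sin.comp (continuous_const.mul continuous_id)).continuousAt.eventually_ne hx

theorem forall_one_sub_ne_neg_natCast {x : ℝ} (hx : sin (π * x) ≠ 0) :
    ∀ m : ℕ, 1 - x ≠ -m :=
  forall_ne_neg_natCast_of_sin_pi_mul_ne_zero (by rwa [mul_one_sub, sin_pi_sub])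

theorem digamma_one_sub_sub_digamma {x : ℝ} (hx : sin (π * x) ≠ 0) :
    digamma (1 - x) - digamma x = π * (cos (π * x) / sin (π * x)) := by
  have hF := (hasDerivAt_log_Gamma (forall_ne_neg_natCast_of_sin_pi_mul_ne_zero hx)).fun_add
    ((hasDerivAt_log_Gamma (forall_one_sub_ne_neg_natCast hx)).comp_const_sub 1 x)
  have hG : HasDerivAt (fun y => log π - log (sin (π * y)))
      (-(cos (π * x) * π / sin (π * x))) x := by
    simpa using (((hasDerivAt_id x).const_mul π).sin.log hx).const_sub (log π)
  have hreflection : (fun y => log (Gamma y) + log (Gamma (1 - y))) =ᶠ[𝓝 x]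
      fun y => log π - log (sin (π * y)) := by
    filter_upwards [eventually_sin_pi_mul_ne_zero hx] with y hy
    rw [← log_mul (Gamma_ne_zero (forall_ne_neg_natCast_of_sin_pi_mul_ne_zero hy))
      (Gamma_ne_zero (forall_one_sub_ne_neg_natCast hy)), Gamma_mul_Gamma_one_sub,
      log_div pi_ne_zero hy]
  linear_combination -hF.unique (hG.congr_of_eventuallyEq hreflection)

theorem trigamma_add_trigamma_one_sub {x : ℝ} (hx : sin (π * x) ≠ 0) :
    trigamma x + trigamma (1 - x) = π ^ 2 / sin (π * x) ^ 2 := by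
  have hF := ((hasDerivAt_digamma (forall_one_sub_ne_neg_natCast hx)).comp_const_sub 1 x).fun_sub
    (hasDerivAt_digamma (forall_ne_neg_natCast_of_sin_pi_mul_ne_zero hx))
  have hG : HasDerivAt (fun y => π * (cos (π * y) / sin (π * y)))
      (π * ((-sin (π * x) * π * sin (π * x) - cos (π * x) * (cos (π * x) * π)) /
        sin (π * x) ^ 2)) x := by
    simpa using (((hasDerivAt_id x).const_mul π).cos.div
      ((hasDerivAt_id x).const_mul π).sin hx).const_mul π
  have hreflection : (fun y => digamma (1 - y) - digamma y) =ᶠ[𝓝 x]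
      fun y => π * (cos (π * y) / sin (π * y)) := by
    filter_upwards [eventually_sin_pi_mul_ne_zero hx] with y hy
    exact digamma_one_sub_sub_digamma hy
  rw [show trigamma x + trigamma (1 - x) = -(-trigamma (1 - x) - trigamma x) by ring,
    hF.unique (hG.congr_of_eventuallyEq hreflection)]
  field_simp
  linear_combination sin_sq_add_cos_sq (π * x)

theorem sin_pi_mul_ne_zero_of_ne_intCast {x : ℝ} (hx : ∀ n : ℤ, x ≠ n) :
    sin (π * x) ≠ 0 := fun h => by
  obtain ⟨n, hn⟩ := sin_eq_zero_iff.1 h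
  exact hx n (mul_left_cancel₀ pi_ne_zero (by linarith))

theorem sin_pi_mul_sub_natCast_sq (x : ℝ) (n : ℕ) : sin (π * (x - n)) ^ 2 = sin (π * x) ^ 2 := by
  rw [show π * (x - n) = π * x - n * π by ring, sin_sub_nat_mul_pi, mul_pow, ← pow_mul,
    mul_comm n, pow_mul, neg_one_sq, one_pow, one_mul]

theorem sin_two_pi_mul_sub_natCast (x : ℝ) (n : ℕ) : sin (2 * π * (x - n)) = sin (2 * π * x) := by
  rw [show 2 * π * (x - n) = 2 * π * x - n * (2 * π) by ring, sin_sub_nat_mul_two_pi]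

theorem sin_two_pi_mul_div_le {t : ℝ} (ht : 0 ≤ t) : sin (2 * π * t) / (2 * π) ≤ t := by
  rw [div_le_iff₀ (by positivity)]
  linarith [sin_le (by positivity : 0 ≤ 2 * π * t)]

theorem one_div_two_pi_sq_mul_one_sub_cos (x : ℝ) :
    1 / (2 * π ^ 2) * (1 - cos (2 * π * x)) = sin (π * x) ^ 2 / π ^ 2 := by
  rw [show 2 * π * x = 2 * (π * x) by ring, cos_two_mul, cos_sq']
  field_simp
  ring

theorem trigamma_sub_trigamma_add_natCast {x : ℝ} (hx : ∀ m : ℕ, x ≠ -m) (M : ℕ) :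
    trigamma x - trigamma (x + M) = ∑ j ∈ range M, 1 / (x + j) ^ 2 := by
  induction M with
  | zero => simp
  | succ M ih =>
    rw [sum_range_succ, ← ih, Nat.cast_succ, ← add_assoc,
      trigamma_add_one (forall_add_natCast_ne_neg hx M)]
    ring

theorem sum_range_one_div_sub_sq {y : ℝ} (M : ℕ) (hy : ∀ m : ℕ, y - M + 1 ≠ -m) :
    ∑ j ∈ range M, 1 / (y - j) ^ 2 = trigamma (y - M + 1) - trigamma (y + 1) := by
  rw [show y + 1 = y - M + 1 + M by ring, trigamma_sub_trigamma_add_natCast hy,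
    ← sum_range_reflect]
  refine sum_congr rfl fun j hj => ?_
  have hjM := mem_range.1 hj
  rw [Nat.cast_sub (by omega), Nat.cast_sub (by omega), Nat.cast_one]
  ring_nf

theorem sum_range_sum_range_one_div_sq_neg (x : ℝ) (N : ℕ) :
    ∑ l ∈ range N, ∑ m ∈ range N, 1 / (-x + l - m) ^ 2 =
      ∑ l ∈ range N, ∑ m ∈ range N, 1 / (x + l - m) ^ 2 := by
  rw [sum_comm]
  exact sum_congr rfl fun _ _ => sum_congr rfl fun _ _ => by ring

noncomputable def sffPhi (b : ℝ) : ℝ := digamma (b + 1) + b * trigamma (b + 1)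

theorem sffPhi_eq {x : ℝ} (hx : ∀ m : ℕ, x ≠ -m) : sffPhi x = digamma x + x * trigamma x := by
  have hx0 : x ≠ 0 := by simpa using hx 0
  rw [sffPhi, digamma_add_one hx, trigamma_add_one hx]
  field_simp
  ring

theorem trigamma_eq_sffPhi_sub {x : ℝ} (hx : ∀ m : ℕ, x ≠ -m) :
    trigamma x = sffPhi x - sffPhi (x - 1) := by
  have hx0 : x ≠ 0 := by simpa using hx 0
  rw [sffPhi, sffPhi, sub_add_cancel, digamma_add_one hx, trigamma_add_one hx]
  field_simp
  ring

theorem sin_sq_div_mul_sffPhi_neg_sub {b : ℝ} (hb : sin (π * b) ≠ 0) :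
    sin (π * b) ^ 2 / π ^ 2 * (sffPhi (-b) - sffPhi b) = sin (2 * π * b) / (2 * π) - b := by
  have hb' := forall_ne_neg_natCast_of_sin_pi_mul_ne_zero hb
  have hb0 : b ≠ 0 := by simpa using hb' 0
  have hdiff : sffPhi (-b) - sffPhi b =
      π * (cos (π * b) / sin (π * b)) - b * (π ^ 2 / sin (π * b) ^ 2) := by
    rw [sffPhi, sffPhi, neg_add_eq_sub, digamma_add_one hb', trigamma_add_one hb',
      ← digamma_one_sub_sub_digamma hb, ← trigamma_add_trigamma_one_sub hb]
    field_simp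
    ring
  rw [hdiff, show 2 * π * b = 2 * (π * b) by ring, sin_two_mul]
  field_simp

theorem sum_range_sum_range_one_div_sq {a : ℝ} (ha : ∀ n : ℤ, a ≠ n) (N : ℕ) :
    ∑ l ∈ range N, ∑ m ∈ range N, 1 / (a + l - m) ^ 2 =
      2 * sffPhi a - sffPhi (a + N) - sffPhi (a - N) := by
  have hrow (l : ℕ) : ∑ m ∈ range N, 1 / (a + l - m) ^ 2 =
      (sffPhi (a + (l + 1 : ℕ) - N) - sffPhi (a + l - N)) -
        (sffPhi (a + (l + 1 : ℕ)) - sffPhi (a + l)) := by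
    have hx : ∀ m : ℕ, a + l - N + 1 ≠ -m :=
      fun m h => ha (N - l - 1 - m) (by push_cast; linarith)
    have hy : ∀ m : ℕ, a + l + 1 ≠ -m := fun m h => ha (-l - 1 - m) (by push_cast; linarith)
    rw [sum_range_one_div_sub_sq N hx, trigamma_eq_sffPhi_sub hx, trigamma_eq_sffPhi_sub hy]
    push_cast
    ring_nf
  rw [sum_congr rfl fun l _ => hrow l, sum_sub_distrib,
    sum_range_sub (fun l : ℕ => sffPhi (a + l - N)), sum_range_sub (fun l : ℕ => sffPhi (a + l))]
  simp only [Nat.cast_zero, add_zero, add_sub_cancel_right]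
  ring

theorem sff_eq_min_add_sffPhi {a : ℝ} (ha : ∀ n : ℤ, a ≠ n) (N : ℕ) :
    (N : ℝ) - sin (π * a) ^ 2 / π ^ 2 * ∑ l ∈ range N, ∑ m ∈ range N, 1 / (a + l - m) ^ 2 =
      min (N : ℝ) (a - sin (2 * π * a) / (2 * π)) +
        sin (π * a) ^ 2 / π ^ 2 * (sffPhi (N + a) + sffPhi |N - a| - 2 * sffPhi a) := by
  rw [sum_range_sum_range_one_div_sq ha, add_comm (N : ℝ) a]
  have haN : a ≠ N := by exact_mod_cast ha N
  rcases lt_or_gt_of_ne haN with hlt | hgt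
  · have hbound := sin_two_pi_mul_div_le (sub_nonneg.2 hlt.le)
    rw [← neg_sub a, mul_neg, sin_neg, neg_div, sin_two_pi_mul_sub_natCast] at hbound
    have hreflection := sin_sq_div_mul_sffPhi_neg_sub (b := a - N)
      (sin_pi_mul_ne_zero_of_ne_intCast fun n h => ha (n + N) (by push_cast; linarith))
    rw [sin_pi_mul_sub_natCast_sq, sin_two_pi_mul_sub_natCast, neg_sub] at hreflection
    rw [abs_of_pos (sub_pos.2 hlt), min_eq_right (by linarith)]
    linear_combination -hreflection
  · have hbound := sin_two_pi_mul_div_le (sub_nonneg.2 hgt.le)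
    rw [sin_two_pi_mul_sub_natCast] at hbound
    rw [abs_of_neg (sub_neg.2 hgt), neg_sub, min_eq_left (by linarith)]
    ring

theorem sff_closed_form_general (N : ℕ) (k : ℝ) (hk : ∀ n : ℤ, k ≠ (n : ℝ)) :
    (N : ℝ) - 1 / (2 * π ^ 2) * (1 - Real.cos (2 * π * k)) *
        ∑ l ∈ Finset.range N, ∑ m ∈ Finset.range N, 1 / (k + l - m) ^ 2 =
      min (N : ℝ) (|k| - Real.sin (2 * π * |k|) / (2 * π)) +
        Real.sin (π * |k|) ^ 2 / π ^ 2 *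
          (digamma ((N : ℝ) + |k|) + ((N : ℝ) + |k|) * trigamma ((N : ℝ) + |k|) +
            digamma ((abs ((N : ℝ) - |k|)) + 1) + (abs ((N : ℝ) - |k|)) * trigamma ((abs ((N : ℝ) - |k|)) + 1) -
            2 * |k| * trigamma (|k| + 1) - 2 * digamma (|k| + 1)) := by
  have habs : ∀ n : ℤ, |k| ≠ n := fun n h => by
    rcases abs_cases k with ⟨hk', -⟩ | ⟨hk', -⟩ <;> rw [hk'] at h
    · exact hk n h
    · exact hk (-n) (by push_cast; linarith)
  have hsum : ∑ l ∈ range N, ∑ m ∈ range N, 1 / (k + l - m) ^ 2 =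
      ∑ l ∈ range N, ∑ m ∈ range N, 1 / (|k| + l - m) ^ 2 := by
    rcases abs_cases k with ⟨hk', -⟩ | ⟨hk', -⟩ <;> rw [hk']
    rw [sum_range_sum_range_one_div_sq_neg]
  have hNk : ∀ m : ℕ, (N : ℝ) + |k| ≠ -m := fun m h => habs (-m - N) (by push_cast; linarith)
  rw [← cos_abs, abs_mul, abs_of_pos (by positivity : (0 : ℝ) < 2 * π),
    one_div_two_pi_sq_mul_one_sub_cos, hsum, sff_eq_min_add_sffPhi habs N, sffPhi_eq hNk, sffPhi,
    sffPhi]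
  ring

/-- Proposition 1: closed form of the second-order SFF of the CUE at non-integer real `k`. -/
theorem sff_closed_form (N : ℕ) (hN : 0 < N) (k : ℝ) (hk : ∀ n : ℤ, k ≠ (n : ℝ)) :
    (N : ℝ) - 1 / (2 * π ^ 2) * (1 - Real.cos (2 * π * k)) *
        ∑ l ∈ Finset.range N, ∑ m ∈ Finset.range N, 1 / (k + l - m) ^ 2 =
      min (N : ℝ) (|k| - Real.sin (2 * π * |k|) / (2 * π)) +
        Real.sin (π * |k|) ^ 2 / π ^ 2 *
          (digamma ((N : ℝ) + |k|) + ((N : ℝ) + |k|) * trigamma ((N : ℝ) + |k|) +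
            digamma ((abs ((N : ℝ) - |k|)) + 1) + (abs ((N : ℝ) - |k|)) * trigamma ((abs ((N : ℝ) - |k|)) + 1) -
            2 * |k| * trigamma (|k| + 1) - 2 * digamma (|k| + 1)) :=
  sff_closed_form_general N k hk
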